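/- arXiv:2206.06459 — 4 statements merged into one kernel-verified Lean document; each statement's English description precedes it below -/
import Mathlib

section
/- The function i ↦ δmax(i)/(i−1) is non-increasing on integers i ≥ 2; that is, for all integers 2 ≤ i ≤ j, δmax(j)/(j−1) ≤ δmax(i)/(i−1). -/
/-- `mfn i = ⌊(−3 + √(1+8i))/2⌋`, the greatest integer `m` with `C(m+2,2) ≤ i`. -/
noncomputable def mfn (i : ℕ) : ℕ :=
  Nat.floor ((-3 + Real.sqrt (1 + 8 * (i : ℝ))) / 2)

/-- `δmax(i)`: equal to `1` if `i = 2` and to `min((2i−2)/(m(i)+3), m(i)+1)` if `i ≥ 3`. -/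
noncomputable def deltaMax (i : ℕ) : ℝ :=
  if i = 2 then 1 else min ((2 * (i : ℝ) - 2) / ((mfn i : ℝ) + 3)) ((mfn i : ℝ) + 1)

lemma mfn_eq (i m : ℕ) (h1 : (m + 1) * (m + 2) ≤ 2 * i) (h2 : 2 * i < (m + 2) * (m + 3)) :
    mfn i = m := by
  have h1' : ((m : ℝ) + 1) * ((m : ℝ) + 2) ≤ 2 * (i : ℝ) := by exact_mod_cast h1
  have h2' : 2 * (i : ℝ) < ((m : ℝ) + 2) * ((m : ℝ) + 3) := by exact_mod_cast h2
  have hm0 : (0 : ℝ) ≤ (m : ℝ) := Nat.cast_nonneg m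
  have hy : (0 : ℝ) ≤ 1 + 8 * (i : ℝ) := by positivity
  have hsq1 : (2 * (m : ℝ) + 3) ≤ Real.sqrt (1 + 8 * (i : ℝ)) := by
    rw [Real.le_sqrt (by linarith) hy]
    nlinarith
  have hsq2 : Real.sqrt (1 + 8 * (i : ℝ)) < 2 * (m : ℝ) + 5 := by
    rw [Real.sqrt_lt' (by linarith)]
    nlinarith
  have h0 : (0 : ℝ) ≤ (-3 + Real.sqrt (1 + 8 * (i : ℝ))) / 2 := by linarith
  unfold mfn
  rw [Nat.floor_eq_iff h0]
  constructor <;> push_cast <;> linarith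

lemma mfn_spec (i : ℕ) (hi : 1 ≤ i) :
    ∃ m : ℕ, (m + 1) * (m + 2) ≤ 2 * i ∧ 2 * i < (m + 2) * (m + 3) ∧ mfn i = m := by
  induction i with
  | zero => omega
  | succ n ih =>
    by_cases hn0 : n = 0
    · subst hn0
      exact ⟨0, by omega, by omega, mfn_eq 1 0 (by omega) (by omega)⟩
    · obtain ⟨m, hm1, hm2, _⟩ := ih (by omega)
      by_cases hc : 2 * (n + 1) < (m + 2) * (m + 3)
      · exact ⟨m, by omega, hc, mfn_eq _ _ (by omega) hc⟩
      · have e : (m + 1 + 1) * (m + 1 + 2) = (m + 2) * (m + 3) := by ring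
        have e2 : (m + 1 + 2) * (m + 1 + 3) = (m + 3) * (m + 4) := by ring
        have h34 : (m + 2) * (m + 3) + 2 ≤ (m + 3) * (m + 4) := by nlinarith
        exact ⟨m + 1, by omega, by omega, mfn_eq _ _ (by omega) (by omega)⟩

lemma key_step (j : ℕ) (hj : 2 ≤ j) :
    deltaMax (j + 1) / ((j : ℝ) + 1 - 1) ≤ deltaMax j / ((j : ℝ) - 1) := by
  rcases Nat.eq_or_lt_of_le hj with h2 | h3
  · -- j = 2
    subst h2
    have hm3 : mfn 3 = 1 := mfn_eq 3 1 (by norm_num) (by norm_num)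
    simp only [deltaMax, hm3]
    norm_num
  · -- j ≥ 3
    have hj3 : 3 ≤ j := h3
    obtain ⟨m, hm1, hm2, hmfn⟩ := mfn_spec j (by omega)
    have hm1' : ((m : ℝ) + 1) * ((m : ℝ) + 2) ≤ 2 * (j : ℝ) := by exact_mod_cast hm1
    have hm2' : 2 * (j : ℝ) < ((m : ℝ) + 2) * ((m : ℝ) + 3) := by exact_mod_cast hm2
    have hm0 : (0 : ℝ) ≤ (m : ℝ) := Nat.cast_nonneg m
    have hjr : (3 : ℝ) ≤ (j : ℝ) := by exact_mod_cast hj3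
    have hj0 : (0 : ℝ) < (j : ℝ) := by linarith
    have hj1 : (0 : ℝ) < (j : ℝ) - 1 := by linarith
    have hne : j ≠ 2 := by omega
    have hne' : j + 1 ≠ 2 := by omega
    have hrhs : deltaMax j / ((j : ℝ) - 1)
        = min (2 / ((m : ℝ) + 3)) (((m : ℝ) + 1) / ((j : ℝ) - 1)) := by
      simp only [deltaMax, if_neg hne, hmfn]
      rw [← min_div_div_right hj1.le]
      congr 1
      field_simp
    by_cases hc : 2 * (j + 1) < (m + 2) * (m + 3)
    · -- mfn (j+1) = m
      have hm' : mfn (j + 1) = m := mfn_eq _ _ (by omega) hc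
      have hlhs : deltaMax (j + 1) / ((j : ℝ) + 1 - 1)
          = min (2 / ((m : ℝ) + 3)) (((m : ℝ) + 1) / (j : ℝ)) := by
        simp only [deltaMax, if_neg hne', hm']
        push_cast
        rw [show (j : ℝ) + 1 - 1 = (j : ℝ) by ring, ← min_div_div_right hj0.le]
        congr 1
        field_simp
        ring
      rw [hlhs, hrhs]
      refine min_le_min le_rfl ?_
      apply div_le_div_of_nonneg_left (by linarith) hj1 (by linarith)
    · -- jump: 2*(j+1) = (m+2)*(m+3), mfn (j+1) = m+1
      obtain ⟨k, hk⟩ := Nat.even_mul_succ_self (m + 2)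
      have e3 : (m + 2) * (m + 3) = (m + 2) * (m + 2 + 1) := by ring
      have heq : 2 * (j + 1) = (m + 2) * (m + 3) := by omega
      have e : (m + 1 + 1) * (m + 1 + 2) = (m + 2) * (m + 3) := by ring
      have e2 : (m + 1 + 2) * (m + 1 + 3) = (m + 3) * (m + 4) := by ring
      have h34 : (m + 2) * (m + 3) + 2 ≤ (m + 3) * (m + 4) := by nlinarith
      have hm' : mfn (j + 1) = m + 1 := mfn_eq _ _ (by omega) (by omega)
      have hlhs : deltaMax (j + 1) / ((j : ℝ) + 1 - 1)
          = min (2 / ((m : ℝ) + 4)) (((m : ℝ) + 2) / (j : ℝ)) := by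
        simp only [deltaMax, if_neg hne', hm']
        push_cast
        rw [show (j : ℝ) + 1 - 1 = (j : ℝ) by ring, ← min_div_div_right hj0.le]
        congr 1
        · field_simp
          ring
        · push_cast
          ring
      have heq' : 2 * ((j : ℝ) + 1) = ((m : ℝ) + 2) * ((m : ℝ) + 3) := by exact_mod_cast heq
      rw [hlhs, hrhs]
      refine le_trans (min_le_left _ _) (le_min ?_ ?_)
      · apply div_le_div_of_nonneg_left (by norm_num) (by linarith) (by linarith)
      · rw [div_le_div_iff₀ (by linarith) hj1]
        nlinarith
  
/-- The function `i ↦ δmax(i)/(i−1)` is non-increasing on integers `i ≥ 2`. -/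
theorem stmt_2 (i j : ℕ) (hi : 2 ≤ i) (hij : i ≤ j) :
    deltaMax j / ((j : ℝ) - 1) ≤ deltaMax i / ((i : ℝ) - 1) := by
  induction j, hij using Nat.le_induction with
  | base => exact le_rfl
  | succ n hn ih =>
    refine le_trans ?_ ih
    have := key_step n (hi.trans hn)
    push_cast
    convert this using 2
end

section
/- For every integer i ≥ 8, δmax(i) ≥ δmin(i). -/
/-- `δmin(i) = max((m(i)+3)/2, (i−1)/(m(i)+1))`. -/
noncomputable def deltaMin (i : ℕ) : ℝ :=
  max (((mfn i : ℝ) + 3) / 2) (((i : ℝ) - 1) / ((mfn i : ℝ) + 1))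

lemma le_mfn_iff (i m : ℕ) (hi : 8 ≤ i) :
    m ≤ mfn i ↔ (m + 1) * (m + 2) ≤ 2 * i := by
  have hi' : (8 : ℝ) ≤ (i : ℝ) := by exact_mod_cast hi
  have hnn : (0:ℝ) ≤ 1 + 8 * (i:ℝ) := by linarith
  have hs := Real.sq_sqrt hnn
  have hs0 := Real.sqrt_nonneg (1 + 8 * (i:ℝ))
  have h0 : (0:ℝ) ≤ (-3 + Real.sqrt (1 + 8 * (i : ℝ))) / 2 := by
    nlinarith [hs, hs0]
  rw [mfn, Nat.le_floor_iff h0]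
  constructor
  · intro h
    have : (((m+1)*(m+2) : ℕ) : ℝ) ≤ ((2*i : ℕ) : ℝ) := by
      push_cast
      nlinarith [hs, hs0]
    exact_mod_cast this
  · intro h
    have h' : (((m+1)*(m+2) : ℕ) : ℝ) ≤ ((2*i : ℕ) : ℝ) := by exact_mod_cast h
    push_cast at h'
    have hsq : ((2*(m:ℝ)+3))^2 ≤ 1 + 8*(i:ℝ) := by nlinarith
    have hle : (2*(m:ℝ)+3) ≤ Real.sqrt (1+8*(i:ℝ)) := by
      have h := Real.sqrt_le_sqrt hsq
      rwa [Real.sqrt_sq (by positivity)] at h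
    linarith


/-- For every integer `i ≥ 8`, `δmax(i) ≥ δmin(i)`. -/
theorem stmt_4 (i : ℕ) (hi : 8 ≤ i) : deltaMin i ≤ deltaMax i := by
  have h1 : (mfn i + 1) * (mfn i + 2) ≤ 2 * i := (le_mfn_iff i (mfn i) hi).1 le_rfl
  have h2' : 2 * i < (mfn i + 2) * (mfn i + 3) := by
    by_contra h
    push_neg at h
    have heq : (mfn i + 1 + 1) * (mfn i + 1 + 2) = (mfn i + 2) * (mfn i + 3) := by ring
    have := (le_mfn_iff i (mfn i + 1) hi).2 (by omega)
    omega
  have h3 : 2 ≤ mfn i := (le_mfn_iff i 2 hi).2 (by omega)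
  set m := mfn i with hm
  have hiR : (8:ℝ) ≤ (i:ℝ) := by exact_mod_cast hi
  have h1R : ((m:ℝ) + 1) * ((m:ℝ) + 2) ≤ 2 * i := by exact_mod_cast h1
  have h2R : 2 * (i:ℝ) < ((m:ℝ) + 2) * ((m:ℝ) + 3) := by exact_mod_cast h2'
  have h3R : (2:ℝ) ≤ (m:ℝ) := by exact_mod_cast h3
  have hp1 : (0:ℝ) < (m:ℝ) + 1 := by linarith
  have hp3 : (0:ℝ) < (m:ℝ) + 3 := by linarith
  -- case m = 2 gives i ≤ 9, handle jointly via 4i ≥ m²+6m+13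
  have key : (m:ℝ)^2 + 6*(m:ℝ) + 13 ≤ 4 * (i:ℝ) := by
    rcases eq_or_lt_of_le h3R with h | h
    · nlinarith
    · have : (3:ℝ) ≤ (m:ℝ) := by
        have : (2:ℕ) < m := by exact_mod_cast h
        exact_mod_cast this
      nlinarith
  rw [deltaMin, deltaMax, if_neg (by omega)]
  apply max_le
  · apply le_min
    · rw [div_le_div_iff₀ (by norm_num) hp3]; nlinarith
    · linarith [div_le_self (by linarith : (0:ℝ) ≤ (m:ℝ)+3) (by norm_num : (1:ℝ) ≤ 2), show ((m:ℝ)+3)/2 ≤ (m:ℝ)+1 by rw [div_le_iff₀ (by norm_num : (0:ℝ) < 2)]; linarith]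
  · apply le_min
    · rw [div_le_div_iff₀ hp1 hp3]; nlinarith
    · rw [div_le_iff₀ hp1]; nlinarith
end

section
/- For every integer p ≥ 2, setting i = C(p+2,2) − 1, one has δmin(i)/(i−1) = 1/p and δmin(i+1)/i = 1/p. -/
/-- For every integer `p ≥ 2`, setting `i = C(p+2,2) − 1`, one has
`δmin(i)/(i−1) = 1/p` and `δmin(i+1)/i = 1/p`. -/
theorem stmt_5 (p i : ℕ) (hp : 2 ≤ p) (hi : i = (p + 2).choose 2 - 1) :
    deltaMin i / ((i : ℝ) - 1) = 1 / p ∧ deltaMin (i + 1) / (i : ℝ) = 1 / p := by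
  obtain ⟨q, rfl⟩ : ∃ q, p = q + 2 := ⟨p - 2, by omega⟩
  have hch : (q + 2 + 2).choose 2 = (q + 4) * (q + 3) / 2 := by
    rw [Nat.choose_two_right]
    have : q + 2 + 2 - 1 = q + 3 := by omega
    rw [this]
  have hev : 2 ∣ (q + 4) * (q + 3) := by
    have h := Nat.even_mul_succ_self (q + 3)
    rw [mul_comm]
    exact h.two_dvd
  have h2i : 2 * i = q * q + 7 * q + 10 := by
    have hd := Nat.div_mul_cancel hev
    have key : (q + 4) * (q + 3) = q * q + 7 * q + 12 := by ring
    subst hi; rw [hch]; omega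
  have hm1 : mfn i = q + 1 := mfn_eq i (q + 1) (by nlinarith) (by nlinarith)
  have hm2 : mfn (i + 1) = q + 2 := mfn_eq (i + 1) (q + 2) (by nlinarith) (by nlinarith)
  have hiR : (2 : ℝ) * i = q * q + 7 * q + 10 := by exact_mod_cast h2i
  have hq0 : (0 : ℝ) ≤ q := Nat.cast_nonneg q
  have hi1 : (0 : ℝ) < (i : ℝ) - 1 := by nlinarith
  have hi0 : (0 : ℝ) < (i : ℝ) := by linarith
  constructor
  · rw [deltaMin, hm1]
    have hmax : ((((q + 1 : ℕ) : ℝ)) + 3) / 2 ≤ ((i : ℝ) - 1) / (((q + 1 : ℕ) : ℝ) + 1) := by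
      rw [div_le_div_iff₀ (by norm_num) (by push_cast; linarith)]
      push_cast
      nlinarith
    rw [max_eq_right hmax]
    push_cast
    field_simp
    ring_nf
  · rw [deltaMin, hm2]
    have hmax : (((i + 1 : ℕ) : ℝ) - 1) / (((q + 2 : ℕ) : ℝ) + 1) ≤ ((((q + 2 : ℕ) : ℝ)) + 3) / 2 := by
      rw [div_le_div_iff₀ (by push_cast; linarith) (by norm_num)]
      push_cast
      nlinarith
    rw [max_eq_left hmax]
    push_cast
    field_simp
    ring_nf
    linear_combination (-1 : ℝ) * hiR
end

section
/- Let n ≥ 2 be an integer and let u₀, …, uₙ be the standard basis of ℝ^{n+1} with its standard inner product. Let S = {u₀, …, uₙ} ∪ {u_{n−2} − u_{n−1} + u_n, n·u_{n−1} − (n+1)·u_n}. Then the dual cone {y ∈ ℝ^{n+1} : ⟨x, y⟩ ≥ 0 for all x ∈ S} equals the set of nonnegative real linear combinations of u₀, …, u_{n−2}, u_{n−2} + u_{n−1}, and u_{n−2} + (n+1)·u_{n−1} + n·u_n. -/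
open Finset

def nonnegSpan {V : Type*} [AddCommMonoid V] [Module ℝ V] (S : Set V) : Set V :=
  { x | ∃ (k : ℕ) (c : Fin k → ℝ) (v : Fin k → V),
      (∀ t, 0 ≤ c t) ∧ (∀ t, v t ∈ S) ∧ x = ∑ t, c t • v t }

lemma ip_single {N : ℕ} (j : Fin N) (z : Fin N → ℝ) :
    ∑ k, (Pi.single j 1 : Fin N → ℝ) k * z k = z j := by
  simp [Pi.single_apply, ite_mul]

/-- Let `n ≥ 2`, and let `u₀, …, uₙ` be the standard basis of `ℝ^{n+1}` with its
standard inner product.  Let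
`S = {u₀, …, uₙ} ∪ {u_{n−2} − u_{n−1} + u_n, n·u_{n−1} − (n+1)·u_n}`.
Then the dual cone `{y : ⟨x,y⟩ ≥ 0 for all x ∈ S}` equals the cone of nonnegative
linear combinations of `u₀, …, u_{n−2}`, `u_{n−2} + u_{n−1}` and
`u_{n−2} + (n+1)·u_{n−1} + n·u_n`. -/
theorem stmt_11 (n : ℕ) (hn : 2 ≤ n)
    (u : Fin (n + 1) → (Fin (n + 1) → ℝ)) (hu : ∀ j, u j = Pi.single j 1) :
    { y : Fin (n + 1) → ℝ |
        ∀ x ∈ ({ x | ∃ j : Fin (n + 1), x = u j } ∪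
          {u ⟨n - 2, by omega⟩ - u ⟨n - 1, by omega⟩ + u ⟨n, by omega⟩,
            (n : ℝ) • u ⟨n - 1, by omega⟩ - ((n : ℝ) + 1) • u ⟨n, by omega⟩} :
              Set (Fin (n + 1) → ℝ)),
          0 ≤ ∑ k, x k * y k }
      = nonnegSpan ({ x | ∃ j : Fin (n + 1), (j : ℕ) ≤ n - 2 ∧ x = u j } ∪
          {u ⟨n - 2, by omega⟩ + u ⟨n - 1, by omega⟩,
            u ⟨n - 2, by omega⟩ + ((n : ℝ) + 1) • u ⟨n - 1, by omega⟩
              + (n : ℝ) • u ⟨n, by omega⟩}) := by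
  obtain ⟨m, rfl⟩ : ∃ m, n = m + 2 := ⟨n - 2, by omega⟩
  simp only [show m + 2 - 2 = m from rfl, show m + 2 - 1 = m + 1 from rfl]
  ext y
  simp only [Set.mem_setOf_eq, nonnegSpan]
  constructor
  · intro h
    have h0 : ∀ j : Fin (m + 2 + 1), 0 ≤ y j := by
      intro j
      have := h (u j) (Set.mem_union_left _ ⟨j, rfl⟩)
      rwa [hu, ip_single] at this
    have h1 : 0 ≤ y ⟨m, by omega⟩ - y ⟨m + 1, by omega⟩ + y ⟨m + 2, by omega⟩ := by
      have := h (u ⟨m, by omega⟩ - u ⟨m + 1, by omega⟩ + u ⟨m + 2, by omega⟩)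
        (Set.mem_union_right _ (Set.mem_insert _ _))
      simpa only [hu, Pi.add_apply, Pi.sub_apply, sub_mul, add_mul,
        Finset.sum_add_distrib, Finset.sum_sub_distrib, ip_single] using this
    have h2 : 0 ≤ (↑(m + 2) : ℝ) * y ⟨m + 1, by omega⟩
        - ((↑(m + 2) : ℝ) + 1) * y ⟨m + 2, by omega⟩ := by
      have := h ((↑(m + 2) : ℝ) • u ⟨m + 1, by omega⟩ - ((↑(m + 2) : ℝ) + 1) • u ⟨m + 2, by omega⟩)
        (Set.mem_union_right _ (Set.mem_insert_of_mem _ rfl))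
      simpa only [hu, Pi.sub_apply, Pi.smul_apply, smul_eq_mul, sub_mul, mul_assoc,
        Finset.sum_sub_distrib, ← Finset.mul_sum, ip_single] using this
    have hm2 : (0:ℝ) < (↑(m + 2) : ℝ) := by positivity
    refine ⟨m + 2 + 1,
      (fun t => if (t:ℕ) < m then y t else if (t:ℕ) = m
          then y ⟨m, by omega⟩ - y ⟨m + 1, by omega⟩ + y ⟨m + 2, by omega⟩
        else if (t:ℕ) = m + 1
          then ((↑(m+2):ℝ) * y ⟨m+1, by omega⟩ - ((↑(m+2):ℝ) + 1) * y ⟨m+2, by omega⟩)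
            / (↑(m+2):ℝ)
        else y ⟨m + 2, by omega⟩ / (↑(m+2):ℝ)),
      (fun t => if (t:ℕ) ≤ m then u ⟨t, by omega⟩ else if (t:ℕ) = m + 1
          then u ⟨m, by omega⟩ + u ⟨m + 1, by omega⟩
        else u ⟨m, by omega⟩ + ((↑(m+2):ℝ) + 1) • u ⟨m + 1, by omega⟩
          + (↑(m+2):ℝ) • u ⟨m + 2, by omega⟩), ?_, ?_, ?_⟩
    · intro t
      dsimp only
      split_ifs
      · exact h0 t
      · exact h1
      · exact div_nonneg h2 hm2.le
      · exact div_nonneg (h0 _) hm2.le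
    · intro t
      dsimp only
      split_ifs with ht1 ht2
      · exact Set.mem_union_left _ ⟨⟨t, by omega⟩, by simpa using ht1, by rw [Fin.eta]⟩
      · exact Set.mem_union_right _ (Set.mem_insert _ _)
      · exact Set.mem_union_right _ (Set.mem_insert_of_mem _ rfl)
    · have hy : y = ∑ j : Fin (m + 2 + 1), y j • u j := by
        funext k
        simp [hu, Finset.sum_apply, Pi.single_apply, mul_ite]
      conv_lhs => rw [hy]
      simp only [Fin.sum_univ_castSucc, Fin.coe_castSucc, Fin.val_last, Fin.is_lt, if_true,
        lt_irrefl, le_refl, Fin.eta, if_false]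
      norm_num
      have e2 : (Fin.last m).castSucc.castSucc = (⟨m, by omega⟩ : Fin (m+2+1)) := rfl
      have e1 : (Fin.last (m+1)).castSucc = (⟨m+1, by omega⟩ : Fin (m+2+1)) := rfl
      have e0 : (Fin.last (m+2)) = (⟨m+2, by omega⟩ : Fin (m+2+1)) := rfl
      rw [e2, e1, e0]
      have hm : ((m:ℝ) + 2) ≠ 0 := by positivity
      match_scalars
      · ring
      all_goals (field_simp; try ring)
  · rintro ⟨k, c, v, hc, hv, rfl⟩ x hx
    have hgen : ∀ t, 0 ≤ ∑ j, x j * v t j := by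
      intro t
      have hvt := hv t
      simp only [Set.mem_union, Set.mem_setOf_eq, Set.mem_insert_iff,
        Set.mem_singleton_iff] at hvt hx
      rcases hx with ⟨j, rfl⟩ | rfl | rfl
      · rw [hu, ip_single]
        rcases hvt with ⟨j', hj', hw⟩ | hw | hw <;> rw [hw]
        · rw [hu]
          simp only [Pi.single_apply]
          split_ifs <;> norm_num
        · simp only [hu, Pi.add_apply, Pi.single_apply]
          split_ifs <;> norm_num
        · simp only [hu, Pi.add_apply, Pi.smul_apply, smul_eq_mul, Pi.single_apply]
          split_ifs <;> positivity
      · rcases hvt with ⟨j', hj', hw⟩ | hw | hw <;> rw [hw] <;>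
          simp only [hu, Pi.add_apply, Pi.sub_apply, Pi.smul_apply, smul_eq_mul, sub_mul,
            add_mul, mul_assoc, Finset.sum_add_distrib, Finset.sum_sub_distrib,
            ← Finset.mul_sum, ip_single] <;>
          simp only [Pi.add_apply, Pi.sub_apply, Pi.smul_apply, smul_eq_mul,
            Pi.single_apply, Fin.ext_iff]
        all_goals (try split_ifs) <;>
          first | omega | (exfalso; omega) | positivity | linarith
      · rcases hvt with ⟨j', hj', hw⟩ | hw | hw <;> rw [hw] <;>
          simp only [hu, Pi.add_apply, Pi.sub_apply, Pi.smul_apply, smul_eq_mul, sub_mul,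
            add_mul, mul_assoc, Finset.sum_add_distrib, Finset.sum_sub_distrib,
            ← Finset.mul_sum, ip_single] <;>
          simp only [Pi.add_apply, Pi.sub_apply, Pi.smul_apply, smul_eq_mul,
            Pi.single_apply, Fin.ext_iff]
        all_goals (try split_ifs) <;>
          first | omega | (exfalso; omega) | positivity | linarith
    have hsum : ∑ j, x j * (∑ t, c t • v t) j = ∑ t, c t * ∑ j, x j * v t j := by
      simp only [Finset.sum_apply, Pi.smul_apply, smul_eq_mul, Finset.mul_sum]
      rw [Finset.sum_comm]
      refine Finset.sum_congr rfl fun t _ => Finset.sum_congr rfl fun j _ => by ring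
    rw [hsum]
    exact Finset.sum_nonneg fun t _ => mul_nonneg (hc t) (hgen t)
end
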